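/- arXiv:2504.11356 — 4 statements merged into one kernel-verified Lean document; each statement's English description precedes it below -/
import Mathlib

section
/- If A, B, C are nonempty compact convex subsets of ℝ (i.e., nonempty compact intervals), then the metric sum is associative: (A ⊕ B) ⊕ C = A ⊕ (B ⊕ C). -/
open Metric Set MeasureTheory TopologicalSpace

/-- The set of metric pairs Λ(A,B). -/
def lamPairs (A B : Set ℝ) : Set (ℝ × ℝ) :=
  {p | p.1 ∈ A ∧ p.2 ∈ B ∧
    (Metric.infDist p.2 A = |p.2 - p.1| ∨ Metric.infDist p.1 B = |p.1 - p.2|)}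

/-- The metric linear sum A ⊕ B. -/
def msum (A B : Set ℝ) : Set ℝ :=
  (fun p : ℝ × ℝ => p.1 + p.2) '' lamPairs A B

lemma infDist_Icc_clamp (x b₁ b₂ : ℝ) (h : b₁ ≤ b₂) :
    Metric.infDist x (Set.Icc b₁ b₂) = |x - max b₁ (min x b₂)| := by
  set y := max b₁ (min x b₂) with hy
  have hyB : y ∈ Set.Icc b₁ b₂ := ⟨le_max_left _ _, max_le h (min_le_right _ _)⟩
  apply le_antisymm
  · have := Metric.infDist_le_dist_of_mem (x := x) hyB
    rwa [Real.dist_eq] at this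
  · rw [Metric.infDist_eq_iInf]
    have hne : Nonempty (Set.Icc b₁ b₂) := ⟨⟨y, hyB⟩⟩
    apply le_ciInf
    rintro ⟨z, hz1, hz2⟩
    rw [Real.dist_eq]
    rcases le_total x b₁ with h1 | h1
    · have hyv : y = b₁ := by
        rw [hy, max_eq_left (le_trans (min_le_left _ _) h1)]
      rw [hyv, abs_of_nonpos (by linarith)]
      have := neg_le_abs (x - z)
      linarith
    · rcases le_total x b₂ with h2 | h2
      · have hyv : y = x := by
          rw [hy, min_eq_left h2, max_eq_right h1]
        rw [hyv, sub_self, abs_zero]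
        exact abs_nonneg _
      · have hyv : y = b₂ := by
          rw [hy, min_eq_right h2, max_eq_right h]
        rw [hyv, abs_of_nonneg (by linarith)]
        have := le_abs_self (x - z)
        linarith

set_option maxHeartbeats 1000000 in
lemma clamp_fix (b₁ b₂ s : ℝ) (hb : b₁ ≤ b₂) :
    max b₁ (min (s - max b₁ (min (s / 2) b₂)) b₂) = max b₁ (min (s / 2) b₂) := by
  have c3 := min_choice (s / 2) b₂
  have l3 := min_le_left (s / 2) b₂; have r3 := min_le_right (s / 2) b₂
  have d3 := max_choice b₁ (min (s / 2) b₂)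
  have u3 := le_max_left b₁ (min (s / 2) b₂)
  have v3 := le_max_right b₁ (min (s / 2) b₂)
  have c4 := min_choice (s - max b₁ (min (s / 2) b₂)) b₂
  have l4 := min_le_left (s - max b₁ (min (s / 2) b₂)) b₂
  have r4 := min_le_right (s - max b₁ (min (s / 2) b₂)) b₂
  have d4 := max_choice b₁ (min (s - max b₁ (min (s / 2) b₂)) b₂)
  have u4 := le_max_left b₁ (min (s - max b₁ (min (s / 2) b₂)) b₂)
  have v4 := le_max_right b₁ (min (s - max b₁ (min (s / 2) b₂)) b₂)
  rcases c3 with c3 | c3 <;> rcases d3 with d3 | d3 <;>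
    rcases c4 with c4 | c4 <;> rcases d4 with d4 | d4 <;> linarith

set_option maxHeartbeats 1000000 in
lemma inv_mem (a₁ a₂ b₁ b₂ s : ℝ) (hb : b₁ ≤ b₂)
    (h1 : a₁ + max b₁ (min a₁ b₂) ≤ s) (h2 : s ≤ a₂ + max b₁ (min a₂ b₂)) :
    a₁ ≤ s - max b₁ (min (s / 2) b₂) ∧ s - max b₁ (min (s / 2) b₂) ≤ a₂ := by
  have c1 := min_choice a₁ b₂
  have l1 := min_le_left a₁ b₂; have r1 := min_le_right a₁ b₂
  have d1 := max_choice b₁ (min a₁ b₂)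
  have u1 := le_max_left b₁ (min a₁ b₂); have v1 := le_max_right b₁ (min a₁ b₂)
  have c2 := min_choice a₂ b₂
  have l2 := min_le_left a₂ b₂; have r2 := min_le_right a₂ b₂
  have d2 := max_choice b₁ (min a₂ b₂)
  have u2 := le_max_left b₁ (min a₂ b₂); have v2 := le_max_right b₁ (min a₂ b₂)
  have c3 := min_choice (s / 2) b₂
  have l3 := min_le_left (s / 2) b₂; have r3 := min_le_right (s / 2) b₂
  have d3 := max_choice b₁ (min (s / 2) b₂)
  have u3 := le_max_left b₁ (min (s / 2) b₂)
  have v3 := le_max_right b₁ (min (s / 2) b₂)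
  constructor
  · rcases c1 with c1 | c1 <;> rcases d1 with d1 | d1 <;>
      rcases c3 with c3 | c3 <;> rcases d3 with d3 | d3 <;> linarith
  · rcases c2 with c2 | c2 <;> rcases d2 with d2 | d2 <;>
      rcases c3 with c3 | c3 <;> rcases d3 with d3 | d3 <;> linarith

/-- Key existence lemma: if ψ(a₁) ≤ s ≤ ψ(a₂) then s is realized by a pair
(x, proj_B x) with x ∈ A. -/
lemma key (a₁ a₂ b₁ b₂ s : ℝ) (hb : b₁ ≤ b₂)
    (h1 : a₁ + max b₁ (min a₁ b₂) ≤ s) (h2 : s ≤ a₂ + max b₁ (min a₂ b₂)) :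
    ∃ x y, x ∈ Set.Icc a₁ a₂ ∧ y ∈ Set.Icc b₁ b₂ ∧ x + y = s ∧
      Metric.infDist x (Set.Icc b₁ b₂) = |x - y| := by
  set cb := max b₁ (min (s / 2) b₂) with hcb
  refine ⟨s - cb, cb, ?_, ⟨le_max_left _ _, max_le hb (min_le_right _ _)⟩, by ring, ?_⟩
  · exact inv_mem a₁ a₂ b₁ b₂ s hb h1 h2
  · rw [infDist_Icc_clamp _ _ _ hb, clamp_fix _ _ _ hb]

lemma msum_Icc (a₁ a₂ b₁ b₂ : ℝ) (ha : a₁ ≤ a₂) (hb : b₁ ≤ b₂) :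
    msum (Set.Icc a₁ a₂) (Set.Icc b₁ b₂) = Set.Icc (a₁ + b₁) (a₂ + b₂) := by
  ext s
  constructor
  · rintro ⟨⟨x, y⟩, ⟨hx, hy, _⟩, rfl⟩
    exact ⟨by have := hx.1; have := hy.1; simpa using by linarith,
      by have := hx.2; have := hy.2; simpa using by linarith⟩
  · rintro ⟨hs1, hs2⟩
    by_cases hlo1 : a₁ + max b₁ (min a₁ b₂) ≤ s
    · by_cases hlo2 : s ≤ a₂ + max b₁ (min a₂ b₂)
      · obtain ⟨x, y, hx, hy, hxy, hd⟩ := key a₁ a₂ b₁ b₂ s hb hlo1 hlo2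
        exact ⟨(x, y), ⟨hx, hy, Or.inr hd⟩, hxy⟩
      · -- s > ψ(a₂); use option 2: φ(b₁) ≤ s ≤ φ(b₂)
        push_neg at hlo2
        have g1 : b₁ + max a₁ (min b₁ a₂) ≤ s := by
          have h3 : max a₁ (min b₁ a₂) ≤ a₂ := max_le ha (min_le_right _ _)
          have h4 : b₁ + a₂ ≤ a₂ + max b₁ (min a₂ b₂) := by
            have := le_max_left b₁ (min a₂ b₂); linarith
          linarith
        have g2 : s ≤ b₂ + max a₁ (min b₂ a₂) := by
          rcases le_total a₂ b₂ with h | h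
          · have h2 : min b₂ a₂ = a₂ := min_eq_right h
            rw [h2]
            have := le_max_right a₁ a₂
            linarith
          · exfalso
            have h1 : min a₂ b₂ = b₂ := min_eq_right h
            rw [h1, max_eq_right hb] at hlo2
            linarith
        obtain ⟨y, x, hy, hx, hxy, hd⟩ := key b₁ b₂ a₁ a₂ s ha g1 g2
        exact ⟨(x, y), ⟨hx, hy, Or.inl hd⟩, by show x + y = s; linarith⟩
    · -- s < ψ(a₁); use option 2
      push_neg at hlo1
      have g1 : b₁ + max a₁ (min b₁ a₂) ≤ s := by
        rcases le_total a₁ b₁ with h | h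
        · exfalso
          have h1 : min a₁ b₂ = a₁ := min_eq_left (le_trans h hb)
          rw [h1, max_eq_left h] at hlo1
          linarith
        · have h2 : min b₁ a₂ = b₁ := min_eq_left (le_trans h ha)
          rw [h2, max_eq_left h]
          linarith
      have g2 : s ≤ b₂ + max a₁ (min b₂ a₂) := by
        have h3 : max b₁ (min a₁ b₂) ≤ b₂ := max_le hb (min_le_right _ _)
        have := le_max_left a₁ (min b₂ a₂)
        linarith
      obtain ⟨y, x, hy, hx, hxy, hd⟩ := key b₁ b₂ a₁ a₂ s ha g1 g2
      exact ⟨(x, y), ⟨hx, hy, Or.inl hd⟩, by show x + y = s; linarith⟩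

theorem metric_sum_assoc_of_convex
    (A B C : Set ℝ) (hA : A.Nonempty) (hAc : IsCompact A) (hAv : Convex ℝ A)
    (hB : B.Nonempty) (hBc : IsCompact B) (hBv : Convex ℝ B)
    (hC : C.Nonempty) (hCc : IsCompact C) (hCv : Convex ℝ C) :
    msum (msum A B) C = msum A (msum B C) := by
  have hAe := eq_Icc_of_connected_compact (hAv.isConnected hA) hAc
  have hBe := eq_Icc_of_connected_compact (hBv.isConnected hB) hBc
  have hCe := eq_Icc_of_connected_compact (hCv.isConnected hC) hCc
  have hAle : sInf A ≤ sSup A := Real.sInf_le_sSup A hAc.bddBelow hAc.bddAbove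
  have hBle : sInf B ≤ sSup B := Real.sInf_le_sSup B hBc.bddBelow hBc.bddAbove
  have hCle : sInf C ≤ sSup C := Real.sInf_le_sSup C hCc.bddBelow hCc.bddAbove
  rw [hAe, hBe, hCe, msum_Icc _ _ _ _ hAle hBle, msum_Icc _ _ _ _ hBle hCle,
    msum_Icc _ _ _ _ (by linarith) hCle, msum_Icc _ _ _ _ hAle (by linarith)]
  rw [add_assoc, add_assoc]
end

section
/- If A and B are nonempty compact intervals [a, ā] and [b, b̄] in ℝ, then A ⊕ B = [a + b, ā + b̄]. -/
open Metric Set MeasureTheory TopologicalSpace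

lemma clamp_mem {a abar : ℝ} (h : a ≤ abar) (y : ℝ) : min (max y a) abar ∈ Icc a abar :=
  ⟨le_min (le_max_right _ _) h, min_le_right _ _⟩

lemma clamp_closest {a abar : ℝ} (h : a ≤ abar) (y z : ℝ) (hz : z ∈ Icc a abar) :
    |y - min (max y a) abar| ≤ |y - z| := by
  rcases le_total y a with h1 | h1
  · rw [max_eq_right h1, min_eq_left h]
    have h2 := neg_abs_le (y - z)
    have h3 : |y - a| = a - y := by rw [abs_sub_comm, abs_of_nonneg (by linarith)]
    rw [h3]; linarith [hz.1]
  · rcases le_total y abar with h2 | h2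
    · rw [max_eq_left h1, min_eq_left h2]
      simp [abs_nonneg]
    · rw [max_eq_left h1, min_eq_right h2]
      have h3 := le_abs_self (y - z)
      have h4 : |y - abar| = y - abar := abs_of_nonneg (by linarith)
      rw [h4]; linarith [hz.2]

lemma infDist_Icc_clamp_s3 {a abar : ℝ} (h : a ≤ abar) (y : ℝ) :
    Metric.infDist y (Icc a abar) = |y - min (max y a) abar| := by
  apply le_antisymm
  · have := Metric.infDist_le_dist_of_mem (x := y) (clamp_mem h y)
    rwa [Real.dist_eq] at this
  · by_contra hlt
    push_neg at hlt
    rw [Metric.infDist_lt_iff (nonempty_Icc.2 h)] at hlt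
    obtain ⟨z, hz, hd⟩ := hlt
    rw [Real.dist_eq] at hd
    exact absurd hd (not_lt.2 (clamp_closest h y z hz))

lemma union_Icc_cover {l1 r1 l2 r2 s : ℝ} (hmin : min l1 l2 ≤ s) (hmax : s ≤ max r1 r2)
    (h12 : l1 ≤ r2) (h21 : l2 ≤ r1) :
    (l1 ≤ s ∧ s ≤ r1) ∨ (l2 ≤ s ∧ s ≤ r2) := by
  rcases le_total l1 l2 with e | e <;> rcases le_total r1 r2 with f | f <;>
    rcases le_total l1 s with d | d <;> rcases le_total s r1 with c | c <;>
    rcases le_total l2 s with d2 | d2 <;> rcases le_total s r2 with c2 | c2 <;>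
    simp only [min_def, max_def] at hmin hmax <;> split_ifs at hmin hmax <;>
    first
      | (left; constructor <;> linarith)
      | (right; constructor <;> linarith)

theorem metric_sum_Icc (a abar b bbar : ℝ) (ha : a ≤ abar) (hb : b ≤ bbar) :
    msum (Icc a abar) (Icc b bbar) = Icc (a + b) (abar + bbar) := by
  ext s
  simp only [msum, lamPairs, mem_image, mem_setOf_eq, Prod.exists, mem_Icc]
  constructor
  · rintro ⟨x, y, ⟨hx, hy, -⟩, rfl⟩
    exact ⟨add_le_add hx.1 hy.1, add_le_add hx.2 hy.2⟩
  · intro hs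
    set f : ℝ → ℝ := fun y => y + min (max y a) abar with hf
    set g : ℝ → ℝ := fun x => x + min (max x b) bbar with hg
    have hmin : min (f b) (g a) ≤ s := by
      rcases le_total b a with h | h
      · have : f b = b + a := by simp [hf, max_eq_right h, min_eq_left ha]
        calc min (f b) (g a) ≤ f b := min_le_left _ _
          _ = b + a := this
          _ ≤ s := by linarith [hs.1]
      · have : g a = a + b := by simp [hg, max_eq_right h, min_eq_left hb]
        calc min (f b) (g a) ≤ g a := min_le_right _ _
          _ = a + b := this
          _ ≤ s := hs.1
    have hmax : s ≤ max (f bbar) (g abar) := by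
      rcases le_total bbar abar with h | h
      · have : g abar = abar + bbar := by simp [hg, max_eq_left (hb.trans h), min_eq_right h]
        calc s ≤ abar + bbar := hs.2
          _ = g abar := this.symm
          _ ≤ max (f bbar) (g abar) := le_max_right _ _
      · have : f bbar = bbar + abar := by simp [hf, max_eq_left (ha.trans h), min_eq_right h]
        calc s ≤ abar + bbar := hs.2
          _ = f bbar := by rw [this]; ring
          _ ≤ max (f bbar) (g abar) := le_max_left _ _
    have h12 : f b ≤ g abar := by
      have h1 : min (max b a) abar ≤ abar := min_le_right _ _
      have h2 : b ≤ min (max abar b) bbar := le_min (le_max_right _ _) hb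
      simp only [hf, hg]; linarith
    have h21 : g a ≤ f bbar := by
      have h1 : min (max a b) bbar ≤ bbar := min_le_right _ _
      have h2 : a ≤ min (max bbar a) abar := le_min (le_max_right _ _) ha
      simp only [hf, hg]; linarith
    have hcont : ContinuousOn f (Icc b bbar) := by
      apply Continuous.continuousOn
      simp only [hf]
      fun_prop
    have hcont' : ContinuousOn g (Icc a abar) := by
      apply Continuous.continuousOn
      simp only [hg]
      fun_prop
    rcases union_Icc_cover hmin hmax h12 h21 with ⟨h1, h2⟩ | ⟨h1, h2⟩
    · obtain ⟨y, hy, hfy⟩ := intermediate_value_Icc hb hcont ⟨h1, h2⟩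
      refine ⟨min (max y a) abar, y, ⟨clamp_mem ha y, hy, Or.inl (infDist_Icc_clamp_s3 ha y)⟩, ?_⟩
      simp only [hf] at hfy
      linarith
    · obtain ⟨x, hx, hgx⟩ := intermediate_value_Icc ha hcont' ⟨h1, h2⟩
      refine ⟨x, min (max x b) bbar, ⟨hx, clamp_mem hb x, Or.inr (infDist_Icc_clamp_s3 hb x)⟩, ?_⟩
      simp only [hg] at hgx
      linarith
end

section
/- For nonempty compact sets A, B ⊆ ℝ, the set of metric pairs Λ(A,B) satisfies max{dim_H A, dim_H B} ≤ dim_H Λ(A,B), where Λ(A,B) ⊆ ℝ² carries the Euclidean metric. -/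
open Metric Set MeasureTheory TopologicalSpace

theorem dimH_lamPairs_ge (A B : Set ℝ)
    (hA : A.Nonempty) (hAc : IsCompact A)
    (hB : B.Nonempty) (hBc : IsCompact B) :
    max (dimH A) (dimH B) ≤ dimH (lamPairs A B) := by
  have hAsub : A ⊆ Prod.fst '' lamPairs A B := by
    intro a ha
    obtain ⟨b, hb, hd⟩ := hBc.exists_infDist_eq_dist hB a
    exact ⟨(a, b), ⟨ha, hb, Or.inr (by rwa [Real.dist_eq] at hd)⟩, rfl⟩
  have hBsub : B ⊆ Prod.snd '' lamPairs A B := by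
    intro b hb
    obtain ⟨a, ha, hd⟩ := hAc.exists_infDist_eq_dist hA b
    exact ⟨(a, b), ⟨ha, hb, Or.inl (by rwa [Real.dist_eq] at hd)⟩, rfl⟩
  have h1 : dimH A ≤ dimH (lamPairs A B) :=
    le_trans (dimH_mono hAsub)
      ((LipschitzWith.prod_fst (α := ℝ) (β := ℝ)).dimH_image_le _)
  have h2 : dimH B ≤ dimH (lamPairs A B) :=
    le_trans (dimH_mono hBsub)
      ((LipschitzWith.prod_snd (α := ℝ) (β := ℝ)).dimH_image_le _)
  exact max_le h1 h2
end

section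
/- For nonempty compact sets A, B, C ⊆ ℝ: if A ⊕ B = A ⊕ C, then B = C (cancellation law for the metric sum). -/
open Metric Set MeasureTheory TopologicalSpace

namespace MetricSumCancelAux

lemma mem_msum {A B : Set ℝ} {a b : ℝ} (ha : a ∈ A) (hb : b ∈ B)
    (h : Metric.infDist b A = |b - a| ∨ Metric.infDist a B = |a - b|) :
    a + b ∈ msum A B := ⟨(a, b), ⟨ha, hb, h⟩, rfl⟩

lemma msum_rep {A B : Set ℝ} {e : ℝ} (h : e ∈ msum A B) :
    ∃ x y, x ∈ A ∧ y ∈ B ∧ x + y = e ∧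
      (Metric.infDist y A = |y - x| ∨ Metric.infDist x B = |x - y|) := by
  rcases h with ⟨⟨x, y⟩, ⟨hx, hy, hd⟩, hs⟩
  exact ⟨x, y, hx, hy, hs, hd⟩

lemma infDist_le' {A : Set ℝ} {x a : ℝ} (ha : a ∈ A) : Metric.infDist x A ≤ |x - a| := by
  simpa [Real.dist_eq] using Metric.infDist_le_dist_of_mem (x := x) ha

lemma infDist_attain {A : Set ℝ} (hAne : A.Nonempty) (hAc : IsCompact A) (x : ℝ) :
    ∃ a ∈ A, Metric.infDist x A = |x - a| := by
  obtain ⟨a, ha, h⟩ := hAc.exists_infDist_eq_dist hAne x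
  exact ⟨a, ha, by simpa [Real.dist_eq] using h⟩

lemma le_infDist' {A : Set ℝ} (hne : A.Nonempty) {x r : ℝ}
    (h : ∀ y ∈ A, r ≤ |x - y|) : r ≤ Metric.infDist x A := by
  by_contra hlt
  push_neg at hlt
  rcases (Metric.infDist_lt_iff hne).1 hlt with ⟨y, hy, hd⟩
  rw [Real.dist_eq] at hd
  exact absurd (h y hy) (by linarith)

/-- the sum of the two maxima belongs to the metric sum. -/
lemma sSup_add_mem {A B : Set ℝ} (hAne : A.Nonempty) (hAc : IsCompact A)
    (hBne : B.Nonempty) (hBc : IsCompact B) : sSup A + sSup B ∈ msum A B := by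
  have hαA : sSup A ∈ A := hAc.sSup_mem hAne
  have hμB : sSup B ∈ B := hBc.sSup_mem hBne
  rcases le_total (sSup A) (sSup B) with hle | hle
  · refine mem_msum hαA hμB (Or.inl (le_antisymm (infDist_le' hαA) ?_))
    refine le_infDist' hAne fun a ha => ?_
    have h1 : a ≤ sSup A := le_csSup hAc.bddAbove ha
    rw [abs_of_nonneg (by linarith)]
    rcases abs_cases (sSup B - a) with ⟨h2, h3⟩ | ⟨h2, h3⟩ <;> rw [h2] <;> linarith
  · refine mem_msum hαA hμB (Or.inr (le_antisymm (infDist_le' hμB) ?_))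
    refine le_infDist' hBne fun b hb => ?_
    have h1 : b ≤ sSup B := le_csSup hBc.bddAbove hb
    rw [abs_of_nonneg (by linarith)]
    rcases abs_cases (sSup A - b) with ⟨h2, h3⟩ | ⟨h2, h3⟩ <;> rw [h2] <;> linarith

lemma sInf_add_mem {A B : Set ℝ} (hAne : A.Nonempty) (hAc : IsCompact A)
    (hBne : B.Nonempty) (hBc : IsCompact B) : sInf A + sInf B ∈ msum A B := by
  have hαA : sInf A ∈ A := hAc.sInf_mem hAne
  have hμB : sInf B ∈ B := hBc.sInf_mem hBne
  rcases le_total (sInf B) (sInf A) with hle | hle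
  · refine mem_msum hαA hμB (Or.inl (le_antisymm (infDist_le' hαA) ?_))
    refine le_infDist' hAne fun a ha => ?_
    have h1 : sInf A ≤ a := csInf_le hAc.bddBelow ha
    rw [abs_of_nonpos (by linarith)]
    rcases abs_cases (sInf B - a) with ⟨h2, h3⟩ | ⟨h2, h3⟩ <;> rw [h2] <;> linarith
  · refine mem_msum hαA hμB (Or.inr (le_antisymm (infDist_le' hμB) ?_))
    refine le_infDist' hBne fun b hb => ?_
    have h1 : sInf B ≤ b := csInf_le hBc.bddBelow hb
    rw [abs_of_nonpos (by linarith)]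
    rcases abs_cases (sInf A - b) with ⟨h2, h3⟩ | ⟨h2, h3⟩ <;> rw [h2] <;> linarith

end MetricSumCancelAux
namespace MetricSumCancelAux

/-- Descending state. -/
def Dst (A B C : Set ℝ) (γ δ x : ℝ) : Prop :=
  x ∈ A ∧ x < δ ∧ γ ≤ 2*x - δ ∧ Metric.infDist x C = δ - x ∧ Metric.infDist x B < δ - x

/-- Ascending state. -/
def Ust (A B C : Set ℝ) (γ δ x : ℝ) : Prop :=
  x ∈ A ∧ γ < x ∧ 2*x - γ ≤ δ ∧ Metric.infDist x C = x - γ ∧ Metric.infDist x B < x - γ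

lemma stepD {A B C : Set ℝ} (hBne : B.Nonempty) (hBc : IsCompact B)
    (hE : msum A B = msum A C) {γ δ : ℝ} (hγC : γ ∈ C) (hδC : δ ∈ C) (hγδ : γ < δ)
    (hgap : ∀ c ∈ C, c ≤ γ ∨ δ ≤ c) {x : ℝ} (hx : Dst A B C γ δ x) :
    ∃ b, b ∈ B ∧ Metric.infDist x B = |x - b| ∧ 2*x - δ < b ∧ b < δ ∧
      Dst A B C γ δ (x + b - δ) := by
  obtain ⟨hxA, hxδ, hγx, hdC, hdB⟩ := hx
  obtain ⟨b, hbB, hxb⟩ := infDist_attain hBne hBc x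
  have habs : |x - b| < δ - x := by rw [← hxb]; exact hdB
  have hb1 : 2*x - δ < b := by rcases abs_cases (x-b) with ⟨h,h'⟩|⟨h,h'⟩ <;> linarith
  have hb2 : b < δ := by rcases abs_cases (x-b) with ⟨h,h'⟩|⟨h,h'⟩ <;> linarith
  refine ⟨b, hbB, hxb, hb1, hb2, ?_⟩
  have hxγδ : (γ+δ)/2 ≤ x := by linarith
  have hγδx : γ < x := by linarith
  have he : x + b ∈ msum A C := by rw [← hE]; exact mem_msum hxA hbB (Or.inr hxb)
  rcases msum_rep he with ⟨x₁, y₁, hx₁A, hy₁C, hsum, hd⟩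
  rcases hd with hd | hd
  · -- type I : impossible
    exfalso
    have h5 : |y₁ - x₁| ≤ |y₁ - x| := by rw [← hd]; exact infDist_le' hxA
    rcases hgap y₁ hy₁C with hy | hy
    · -- y₁ ≤ γ
      have h6 : x₁ - y₁ ≤ |y₁ - x₁| := by
        have := le_abs_self (x₁ - y₁); rwa [abs_sub_comm] at this
      have h7 : |y₁ - x| = x - y₁ := by rw [abs_of_nonpos (by linarith)]; ring
      linarith
    · -- δ ≤ y₁
      have h6 : y₁ - x₁ ≤ |y₁ - x₁| := le_abs_self _
      have h7 : |y₁ - x| = y₁ - x := abs_of_nonneg (by linarith)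
      linarith
  · -- type II
    have hγle : Metric.infDist x₁ C ≤ |x₁ - γ| := infDist_le' hγC
    have hδle : Metric.infDist x₁ C ≤ |x₁ - δ| := infDist_le' hδC
    rcases hgap y₁ hy₁C with hy | hy
    · -- y₁ ≤ γ : impossible
      exfalso
      have hx₁γ : γ < x₁ := by nlinarith
      have hy₁γ : y₁ = γ := by
        by_contra hne
        have hylt : y₁ < γ := lt_of_le_of_ne hy hne
        rw [abs_of_nonneg (by linarith : (0:ℝ) ≤ x₁ - y₁)] at hd
        rw [abs_of_nonneg (by linarith : (0:ℝ) ≤ x₁ - γ)] at hγle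
        linarith
      rw [hy₁γ] at hsum hd
      rw [abs_of_nonneg (by linarith : (0:ℝ) ≤ x₁ - γ)] at hd
      have hx₁δ : x₁ < δ := by
        by_contra hge
        push_neg at hge
        rw [abs_of_nonneg (by linarith : (0:ℝ) ≤ x₁ - δ)] at hδle
        linarith
      rw [abs_of_nonpos (by linarith : x₁ - δ ≤ (0:ℝ))] at hδle
      linarith
    · -- δ ≤ y₁ : spawn
      have hx₁y : x₁ < y₁ := by nlinarith
      have hy₁δ : y₁ = δ := by
        by_contra hne
        have hylt : δ < y₁ := lt_of_le_of_ne hy (Ne.symm hne)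
        rcases le_or_gt x₁ δ with h8 | h8
        · rw [abs_of_nonpos (by linarith : x₁ - y₁ ≤ (0:ℝ))] at hd
          rw [abs_of_nonpos (by linarith : x₁ - δ ≤ (0:ℝ))] at hδle
          linarith
        · linarith
      rw [hy₁δ] at hsum hd
      have hx₁ : x₁ = x + b - δ := by linarith
      rw [← hx₁]
      have hx₁δ : x₁ < δ := by linarith
      rw [abs_of_nonpos (by linarith : x₁ - δ ≤ (0:ℝ))] at hd
      have hγ2 : γ ≤ 2*x₁ - δ := by
        rcases le_or_gt x₁ γ with h8 | h8
        · rw [abs_of_nonpos (by linarith : x₁ - γ ≤ (0:ℝ))] at hγle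
          linarith
        · rw [abs_of_nonneg (by linarith : (0:ℝ) ≤ x₁ - γ)] at hγle
          linarith
      refine ⟨hx₁A, hx₁δ, hγ2, by linarith, ?_⟩
      have h9 : Metric.infDist x₁ B ≤ |x₁ - b| := infDist_le' hbB
      have h10 : |x₁ - b| = δ - x := by
        rw [abs_of_nonpos (by linarith : x₁ - b ≤ (0:ℝ))]; linarith
      linarith

lemma stepU {A B C : Set ℝ} (hBne : B.Nonempty) (hBc : IsCompact B)
    (hE : msum A B = msum A C) {γ δ : ℝ} (hγC : γ ∈ C) (hδC : δ ∈ C) (hγδ : γ < δ)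
    (hgap : ∀ c ∈ C, c ≤ γ ∨ δ ≤ c) {x : ℝ} (hx : Ust A B C γ δ x) :
    ∃ b, b ∈ B ∧ Metric.infDist x B = |x - b| ∧ γ < b ∧ b < 2*x - γ ∧
      (Ust A B C γ δ (x + b - γ) ∨ Dst A B C γ δ (x + b - δ)) := by
  obtain ⟨hxA, hγx, hxγδ2, hdC, hdB⟩ := hx
  obtain ⟨b, hbB, hxb⟩ := infDist_attain hBne hBc x
  have habs : |x - b| < x - γ := by rw [← hxb]; exact hdB
  have hb1 : γ < b := by rcases abs_cases (x-b) with ⟨h,h'⟩|⟨h,h'⟩ <;> linarith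
  have hb2 : b < 2*x - γ := by rcases abs_cases (x-b) with ⟨h,h'⟩|⟨h,h'⟩ <;> linarith
  refine ⟨b, hbB, hxb, hb1, hb2, ?_⟩
  have hxγδ : x ≤ (γ+δ)/2 := by linarith
  have hxδ : x < δ := by linarith
  have he : x + b ∈ msum A C := by rw [← hE]; exact mem_msum hxA hbB (Or.inr hxb)
  rcases msum_rep he with ⟨x₁, y₁, hx₁A, hy₁C, hsum, hd⟩
  rcases hd with hd | hd
  · -- type I : impossible
    exfalso
    have h5 : |y₁ - x₁| ≤ |y₁ - x| := by rw [← hd]; exact infDist_le' hxA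
    rcases hgap y₁ hy₁C with hy | hy
    · have h6 : x₁ - y₁ ≤ |y₁ - x₁| := by
        have := le_abs_self (x₁ - y₁); rwa [abs_sub_comm] at this
      have h7 : |y₁ - x| = x - y₁ := by rw [abs_of_nonpos (by linarith)]; ring
      linarith
    · have h6 : y₁ - x₁ ≤ |y₁ - x₁| := le_abs_self _
      have h7 : |y₁ - x| = y₁ - x := abs_of_nonneg (by linarith)
      have hbδ : b < δ := by linarith
      linarith
  · -- type II
    have hγle : Metric.infDist x₁ C ≤ |x₁ - γ| := infDist_le' hγC
    have hδle : Metric.infDist x₁ C ≤ |x₁ - δ| := infDist_le' hδC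
    rcases hgap y₁ hy₁C with hy | hy
    · -- y₁ ≤ γ : spawn U
      have hx₁γ : γ < x₁ := by nlinarith
      have hy₁γ : y₁ = γ := by
        by_contra hne
        have hylt : y₁ < γ := lt_of_le_of_ne hy hne
        rw [abs_of_nonneg (by linarith : (0:ℝ) ≤ x₁ - y₁)] at hd
        rw [abs_of_nonneg (by linarith : (0:ℝ) ≤ x₁ - γ)] at hγle
        linarith
      rw [hy₁γ] at hsum hd
      have hx₁ : x₁ = x + b - γ := by linarith
      rw [abs_of_nonneg (by linarith : (0:ℝ) ≤ x₁ - γ)] at hd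
      have hx₁δ : x₁ < δ := by
        by_contra hge
        push_neg at hge
        rw [abs_of_nonneg (by linarith : (0:ℝ) ≤ x₁ - δ)] at hδle
        linarith
      rw [abs_of_nonpos (by linarith : x₁ - δ ≤ (0:ℝ))] at hδle
      left
      rw [← hx₁]
      refine ⟨hx₁A, hx₁γ, by linarith, hd, ?_⟩
      have h9 : Metric.infDist x₁ B ≤ |x₁ - b| := infDist_le' hbB
      have h10 : |x₁ - b| = x - γ := by
        rw [abs_of_nonneg (by linarith : (0:ℝ) ≤ x₁ - b)]; linarith
      linarith
    · -- δ ≤ y₁ : spawn D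
      have hx₁y : x₁ < y₁ := by nlinarith
      have hy₁δ : y₁ = δ := by
        by_contra hne
        have hylt : δ < y₁ := lt_of_le_of_ne hy (Ne.symm hne)
        rcases le_or_gt x₁ δ with h8 | h8
        · rw [abs_of_nonpos (by linarith : x₁ - y₁ ≤ (0:ℝ))] at hd
          rw [abs_of_nonpos (by linarith : x₁ - δ ≤ (0:ℝ))] at hδle
          linarith
        · nlinarith
      rw [hy₁δ] at hsum hd
      have hx₁ : x₁ = x + b - δ := by linarith
      right
      rw [← hx₁]
      have hbδ : b < δ := by linarith
      have hx₁δ : x₁ < δ := by linarith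
      rw [abs_of_nonpos (by linarith : x₁ - δ ≤ (0:ℝ))] at hd
      have hγ2 : γ ≤ 2*x₁ - δ := by
        rcases le_or_gt x₁ γ with h8 | h8
        · rw [abs_of_nonpos (by linarith : x₁ - γ ≤ (0:ℝ))] at hγle
          linarith
        · rw [abs_of_nonneg (by linarith : (0:ℝ) ≤ x₁ - γ)] at hγle
          linarith
      refine ⟨hx₁A, hx₁δ, hγ2, by linarith, ?_⟩
      have h9 : Metric.infDist x₁ B ≤ |x₁ - b| := infDist_le' hbB
      have h10 : |x₁ - b| = δ - x := by
        rw [abs_of_nonpos (by linarith : x₁ - b ≤ (0:ℝ))]; linarith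
      linarith

end MetricSumCancelAux
namespace MetricSumCancelAux

lemma falseD {A B C : Set ℝ} (hBne : B.Nonempty) (hBc : IsCompact B)
    (hE : msum A B = msum A C) {γ δ : ℝ} (hγC : γ ∈ C) (hδC : δ ∈ C) (hγδ : γ < δ)
    (hgap : ∀ c ∈ C, c ≤ γ ∨ δ ≤ c) {x₀ : ℝ} (h₀ : Dst A B C γ δ x₀) : False := by
  have step := fun x hx => stepD hBne hBc hE hγC hδC hγδ hgap (x := x) hx
  choose bf hbB hbid hbgt hblt hbD using step
  let S : ℕ → {x : ℝ // Dst A B C γ δ x} := fun n =>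
    Nat.rec ⟨x₀, h₀⟩ (fun _ p => ⟨p.1 + bf p.1 p.2 - δ, hbD p.1 p.2⟩) n
  set u : ℕ → ℝ := fun n => (S n).1 with hu
  have hDst : ∀ n, Dst A B C γ δ (u n) := fun n => (S n).2
  have hrec : ∀ n, u (n+1) = u n + bf (u n) (S n).2 - δ := fun n => rfl
  set bb : ℕ → ℝ := fun n => bf (u n) (S n).2 with hbb
  have hbbB : ∀ n, bb n ∈ B := fun n => hbB _ _
  have hbbid : ∀ n, Metric.infDist (u n) B = |u n - bb n| := fun n => hbid _ _
  have hbbgt : ∀ n, 2 * u n - δ < bb n := fun n => hbgt _ _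
  have hbblt : ∀ n, bb n < δ := fun n => hblt _ _
  have hanti : Antitone u := antitone_nat_of_succ_le (fun n => by
    have h1 := hbblt n
    have h2 := hrec n
    linarith)
  have hlb : ∀ n, (γ+δ)/2 ≤ u n := fun n => by
    have h := (hDst n).2.2.1; linarith
  have hbdd : BddBelow (Set.range u) := ⟨(γ+δ)/2, by rintro _ ⟨n, rfl⟩; exact hlb n⟩
  set l : ℝ := ⨅ n, u n with hl
  have htend : Filter.Tendsto u Filter.atTop (nhds l) := tendsto_atTop_ciInf hanti hbdd
  have hlle : ∀ n, l ≤ u n := fun n => ciInf_le hbdd n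
  have htends : Filter.Tendsto (fun n => u (n+1)) Filter.atTop (nhds l) :=
    htend.comp (Filter.tendsto_add_atTop_nat 1)
  have hbtend : Filter.Tendsto bb Filter.atTop (nhds δ) := by
    have heq : bb = fun n => u (n+1) - u n + δ := by
      funext n; have h := hrec n; linarith
    rw [heq]
    have h2 := (htends.sub htend).add_const δ
    simpa using h2
  have hlδ : l < δ := lt_of_le_of_lt (hlle 0) (hDst 0).2.1
  have hdBl : Metric.infDist l B = δ - l := by
    have h1 : Filter.Tendsto (fun n => Metric.infDist (u n) B) Filter.atTop
        (nhds (Metric.infDist l B)) :=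
      ((Metric.continuous_infDist_pt B).tendsto l).comp htend
    have h2 : Filter.Tendsto (fun n => |u n - bb n|) Filter.atTop (nhds (|l - δ|)) :=
      (htend.sub hbtend).abs
    have heq : (fun n => Metric.infDist (u n) B) = fun n => |u n - bb n| := funext hbbid
    rw [heq] at h1
    have h3 := tendsto_nhds_unique h1 h2
    rw [h3, abs_of_nonpos (by linarith : l - δ ≤ (0:ℝ))]; ring
  have hkey : δ - l ≤ |l - bb 0| := by rw [← hdBl]; exact infDist_le' (hbbB 0)
  rcases abs_cases (l - bb 0) with ⟨h,h'⟩|⟨h,h'⟩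
  · have h5 := hbbgt 0
    have h6 := hlle 0
    linarith
  · have h5 := hbblt 0
    linarith

lemma falseU {A B C : Set ℝ} (hBne : B.Nonempty) (hBc : IsCompact B)
    (hE : msum A B = msum A C) {γ δ : ℝ} (hγC : γ ∈ C) (hδC : δ ∈ C) (hγδ : γ < δ)
    (hgap : ∀ c ∈ C, c ≤ γ ∨ δ ≤ c) {x₀ : ℝ} (h₀ : Ust A B C γ δ x₀) : False := by
  have step : ∀ x, Ust A B C γ δ x → ∃ b, b ∈ B ∧ Metric.infDist x B = |x - b| ∧
      γ < b ∧ b < 2*x - γ ∧ Ust A B C γ δ (x + b - γ) := by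
    intro x hx
    obtain ⟨b, h1, h2, h3, h4, h5⟩ := stepU hBne hBc hE hγC hδC hγδ hgap hx
    rcases h5 with h5 | h5
    · exact ⟨b, h1, h2, h3, h4, h5⟩
    · exact (falseD hBne hBc hE hγC hδC hγδ hgap h5).elim
  choose bf hbB hbid hbgt hblt hbU using step
  let S : ℕ → {x : ℝ // Ust A B C γ δ x} := fun n =>
    Nat.rec ⟨x₀, h₀⟩ (fun _ p => ⟨p.1 + bf p.1 p.2 - γ, hbU p.1 p.2⟩) n
  set u : ℕ → ℝ := fun n => (S n).1 with hu
  have hUst : ∀ n, Ust A B C γ δ (u n) := fun n => (S n).2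
  have hrec : ∀ n, u (n+1) = u n + bf (u n) (S n).2 - γ := fun n => rfl
  set bb : ℕ → ℝ := fun n => bf (u n) (S n).2 with hbb
  have hbbB : ∀ n, bb n ∈ B := fun n => hbB _ _
  have hbbid : ∀ n, Metric.infDist (u n) B = |u n - bb n| := fun n => hbid _ _
  have hbbgt : ∀ n, γ < bb n := fun n => hbgt _ _
  have hbblt : ∀ n, bb n < 2 * u n - γ := fun n => hblt _ _
  have hmono : Monotone u := monotone_nat_of_le_succ (fun n => by
    have h1 := hbbgt n
    have h2 := hrec n
    linarith)
  have hub : ∀ n, u n ≤ (γ+δ)/2 := fun n => by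
    have h := (hUst n).2.2.1; linarith
  have hbdd : BddAbove (Set.range u) := ⟨(γ+δ)/2, by rintro _ ⟨n, rfl⟩; exact hub n⟩
  set l : ℝ := ⨆ n, u n with hl
  have htend : Filter.Tendsto u Filter.atTop (nhds l) := tendsto_atTop_ciSup hmono hbdd
  have hlle : ∀ n, u n ≤ l := fun n => le_ciSup hbdd n
  have htends : Filter.Tendsto (fun n => u (n+1)) Filter.atTop (nhds l) :=
    htend.comp (Filter.tendsto_add_atTop_nat 1)
  have hbtend : Filter.Tendsto bb Filter.atTop (nhds γ) := by
    have heq : bb = fun n => u (n+1) - u n + γ := by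
      funext n; have h := hrec n; linarith
    rw [heq]
    have h2 := (htends.sub htend).add_const γ
    simpa using h2
  have hlγ : γ < l := lt_of_lt_of_le (hUst 0).2.1 (hlle 0)
  have hdBl : Metric.infDist l B = l - γ := by
    have h1 : Filter.Tendsto (fun n => Metric.infDist (u n) B) Filter.atTop
        (nhds (Metric.infDist l B)) :=
      ((Metric.continuous_infDist_pt B).tendsto l).comp htend
    have h2 : Filter.Tendsto (fun n => |u n - bb n|) Filter.atTop (nhds (|l - γ|)) :=
      (htend.sub hbtend).abs
    have heq : (fun n => Metric.infDist (u n) B) = fun n => |u n - bb n| := funext hbbid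
    rw [heq] at h1
    have h3 := tendsto_nhds_unique h1 h2
    rw [h3, abs_of_nonneg (by linarith : (0:ℝ) ≤ l - γ)]
  have hkey : l - γ ≤ |l - bb 0| := by rw [← hdBl]; exact infDist_le' (hbbB 0)
  rcases abs_cases (l - bb 0) with ⟨h,h'⟩|⟨h,h'⟩
  · have h5 := hbbgt 0
    linarith
  · have h5 := hbblt 0
    have h6 := hlle 0
    linarith

end MetricSumCancelAux
namespace MetricSumCancelAux

lemma master {A B C : Set ℝ} (hAne : A.Nonempty) (hAc : IsCompact A)
    (hBne : B.Nonempty) (hBc : IsCompact B)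
    (hE : msum A B = msum A C) {γ β δ : ℝ} (hγC : γ ∈ C) (hδC : δ ∈ C) (hβB : β ∈ B)
    (h1 : γ < β) (h2 : β < δ) (hgap : ∀ c ∈ C, c ≤ γ ∨ δ ≤ c) : False := by
  obtain ⟨p, hpA, hrp⟩ := infDist_attain hAne hAc β
  have hw : p + β ∈ msum A C := by rw [← hE]; exact mem_msum hpA hβB (Or.inl hrp)
  rcases msum_rep hw with ⟨x, y, hxA, hyC, hsum, hd⟩
  have hcons : |β - p| ≤ |β - x| := by rw [← hrp]; exact infDist_le' hxA
  have hy := hgap y hyC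
  rcases hd with hd | hd
  · -- type I : impossible
    have h3 : |y - x| ≤ |y - p| := by rw [← hd]; exact infDist_le' hpA
    have h3' : |2*y - β - p| ≤ |y - p| := by
      rw [show 2*y - β - p = y - x from by linarith]; exact h3
    have hcons' : |β - p| ≤ |y - p| := by
      rw [show β - x = y - p from by linarith] at hcons
      exact hcons
    have e1 := mul_self_le_mul_self (abs_nonneg _) h3'
    have e2 := mul_self_le_mul_self (abs_nonneg _) hcons'
    rw [abs_mul_abs_self, abs_mul_abs_self] at e1 e2
    rcases hy with hy | hy
    · nlinarith [mul_pos_of_neg_of_neg (show y - β < 0 by linarith) (show y - β < 0 by linarith)]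
    · nlinarith [mul_pos (show (0:ℝ) < y - β by linarith) (show (0:ℝ) < y - β by linarith)]
  · -- type II
    rcases hy with hy | hy
    · -- y ≤ γ : spawn U
      have hxγ : γ < x := by
        by_contra hge; push_neg at hge
        have h6 : |β - p| = β - p := abs_of_nonneg (by linarith)
        have h7 : |β - x| = β - x := abs_of_nonneg (by linarith)
        rw [h6, h7] at hcons; linarith
      have hyγ : y = γ := by
        by_contra hne
        have hylt : y < γ := lt_of_le_of_ne hy hne
        have h6 : Metric.infDist x C ≤ |x - γ| := infDist_le' hγC
        rw [abs_of_nonneg (by linarith : (0:ℝ) ≤ x - γ)] at h6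
        rw [abs_of_nonneg (by linarith : (0:ℝ) ≤ x - y)] at hd
        linarith
      rw [hyγ] at hsum hd
      have hpγ : γ < p := by
        by_contra hge; push_neg at hge
        have h6 : |β - p| = β - p := abs_of_nonneg (by linarith)
        have h7 : |β - x| = β - x := abs_of_nonneg (by linarith)
        rw [h6, h7] at hcons; linarith
      have hxβ : β < x := by linarith
      rw [abs_of_nonneg (by linarith : (0:ℝ) ≤ x - γ)] at hd
      have h2x : 2*x - γ ≤ δ := by
        have h6 : Metric.infDist x C ≤ |x - δ| := infDist_le' hδC
        rcases le_or_gt x δ with h8 | h8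
        · rw [abs_of_nonpos (by linarith : x - δ ≤ (0:ℝ))] at h6; linarith
        · rw [abs_of_nonneg (by linarith : (0:ℝ) ≤ x - δ)] at h6; linarith
      have hdB : Metric.infDist x B < x - γ := by
        have h6 : Metric.infDist x B ≤ |x - β| := infDist_le' hβB
        rw [abs_of_nonneg (by linarith : (0:ℝ) ≤ x - β)] at h6
        linarith
      exact falseU hBne hBc hE hγC hδC (by linarith) hgap ⟨hxA, hxγ, h2x, hd, hdB⟩
    · -- δ ≤ y : spawn D
      have hxδ : x < δ := by
        by_contra hge; push_neg at hge
        have h6 : |β - p| = p - β := by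
          rw [abs_of_nonpos (by linarith : β - p ≤ (0:ℝ))]; ring
        have h7 : |β - x| = x - β := by
          rw [abs_of_nonpos (by linarith : β - x ≤ (0:ℝ))]; ring
        rw [h6, h7] at hcons; linarith
      have hyδ : y = δ := by
        by_contra hne
        have hylt : δ < y := lt_of_le_of_ne hy (Ne.symm hne)
        have h6 : Metric.infDist x C ≤ |x - δ| := infDist_le' hδC
        rw [abs_of_nonpos (by linarith : x - δ ≤ (0:ℝ))] at h6
        rw [abs_of_nonpos (by linarith : x - y ≤ (0:ℝ))] at hd
        linarith
      rw [hyδ] at hsum hd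
      have hxβ : x < β := by
        by_contra hge; push_neg at hge
        have h6 : |β - p| = p - β := by
          rw [abs_of_nonpos (by linarith : β - p ≤ (0:ℝ))]; ring
        have h7 : |β - x| = x - β := by
          rw [abs_of_nonpos (by linarith : β - x ≤ (0:ℝ))]; ring
        rw [h6, h7] at hcons; linarith
      rw [abs_of_nonpos (by linarith : x - δ ≤ (0:ℝ))] at hd
      have hγ2 : γ ≤ 2*x - δ := by
        have h6 : Metric.infDist x C ≤ |x - γ| := infDist_le' hγC
        rcases le_or_gt x γ with h8 | h8
        · rw [abs_of_nonpos (by linarith : x - γ ≤ (0:ℝ))] at h6; linarith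
        · rw [abs_of_nonneg (by linarith : (0:ℝ) ≤ x - γ)] at h6; linarith
      have hdB : Metric.infDist x B < δ - x := by
        have h6 : Metric.infDist x B ≤ |x - β| := infDist_le' hβB
        rw [abs_of_nonpos (by linarith : x - β ≤ (0:ℝ))] at h6
        linarith
      exact falseD hBne hBc hE hγC hδC (by linarith) hgap
        ⟨hxA, hxδ, hγ2, by linarith, hdB⟩

lemma subset_aux {A B C : Set ℝ} (hAne : A.Nonempty) (hAc : IsCompact A)
    (hBne : B.Nonempty) (hBc : IsCompact B) (hCne : C.Nonempty) (hCc : IsCompact C)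
    (h : msum A B = msum A C) : B ⊆ C := by
  intro β hβB
  by_contra hβC
  by_cases hup : (C ∩ Ici β).Nonempty
  · by_cases hdn : (C ∩ Iic β).Nonempty
    · -- main case : build the gap
      have hupc : IsCompact (C ∩ Ici β) := hCc.inter_right isClosed_Ici
      have hdnc : IsCompact (C ∩ Iic β) := hCc.inter_right isClosed_Iic
      set δ := sInf (C ∩ Ici β) with hδ
      set γ := sSup (C ∩ Iic β) with hγ
      have hδmem : δ ∈ C ∩ Ici β := hupc.sInf_mem hup
      have hγmem : γ ∈ C ∩ Iic β := hdnc.sSup_mem hdn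
      have hδC : δ ∈ C := hδmem.1
      have hγC : γ ∈ C := hγmem.1
      have hβδ : β < δ := hδmem.2.lt_of_ne (fun he => hβC (by rw [he]; exact hδC))
      have hγβ : γ < β := hγmem.2.lt_of_ne (fun he => hβC (by rw [← he]; exact hγC))
      have hgap : ∀ c ∈ C, c ≤ γ ∨ δ ≤ c := by
        intro c hc
        rcases le_total c β with h8 | h8
        · exact Or.inl (le_csSup hdnc.bddAbove ⟨hc, h8⟩)
        · exact Or.inr (csInf_le hupc.bddBelow ⟨hc, h8⟩)
      exact master hAne hAc hBne hBc h hγC hδC hβB hγβ hβδ hgap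
    · -- C entirely above β : min contradiction
      have hCb : ∀ c ∈ C, β < c := by
        intro c hc
        by_contra hle; push_neg at hle
        exact hdn ⟨c, hc, hle⟩
      have hmem : sInf A + sInf B ∈ msum A B := sInf_add_mem hAne hAc hBne hBc
      rw [h] at hmem
      rcases msum_rep hmem with ⟨x, y, hx, hy, hs, -⟩
      have h3 : sInf A ≤ x := csInf_le hAc.bddBelow hx
      have h4 : β < y := hCb y hy
      have h5 : sInf B ≤ β := csInf_le hBc.bddBelow hβB
      linarith
  · -- C entirely below β : max contradiction
    have hCb : ∀ c ∈ C, c < β := by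
      intro c hc
      by_contra hle; push_neg at hle
      exact hup ⟨c, hc, hle⟩
    have hmem : sSup A + sSup B ∈ msum A B := sSup_add_mem hAne hAc hBne hBc
    rw [h] at hmem
    rcases msum_rep hmem with ⟨x, y, hx, hy, hs, -⟩
    have h3 : x ≤ sSup A := le_csSup hAc.bddAbove hx
    have h4 : y < β := hCb y hy
    have h5 : β ≤ sSup B := le_csSup hBc.bddAbove hβB
    linarith

end MetricSumCancelAux

theorem metric_sum_cancel (A B C : Set ℝ)
    (hA : A.Nonempty) (hAc : IsCompact A)
    (hB : B.Nonempty) (hBc : IsCompact B)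
    (hC : C.Nonempty) (hCc : IsCompact C)
    (h : msum A B = msum A C) : B = C := by
  apply Set.Subset.antisymm
  · exact MetricSumCancelAux.subset_aux hA hAc hB hBc hC hCc h
  · exact MetricSumCancelAux.subset_aux hA hAc hC hCc hB hBc h.symm
end
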